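/- Let d ≥ 2 and let e be any directed edge of the Kautz digraph K(d,D). Then cong(e) = ∑_{k=1}^{D} U_k(e) ≥ (d/(d−1))·(1 − 1/(D·(d−1)))·U_D(e). -/

import Mathlib

open scoped BigOperators Classical

namespace Kautz

/-- A vertex of the Kautz digraph `K(d,D)`: a word of length `D` over the
alphabet `{0,1,…,d}` in which adjacent letters are distinct. -/
structure Vertex (d D : ℕ) where
  word : List (Fin (d+1))
  length_eq : word.length = D
  chain : word.Chain' (· ≠ ·)

/-- Adjacency in `K(d,D)`: there is an edge `u → v` iff some word `w` of length
`D+1` with adjacent letters distinct has `u` as its prefix of length `D` and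
`v` as its suffix of length `D`. -/
def Adj {d D : ℕ} (u v : Vertex d D) : Prop :=
  ∃ w : List (Fin (d+1)), w.length = D + 1 ∧ w.Chain' (· ≠ ·) ∧
    u.word = w.dropLast ∧ v.word = w.tail

/-- A directed edge of `K(d,D)`. -/
structure Edge (d D : ℕ) where
  src : Vertex d D
  tgt : Vertex d D
  adj : Adj src tgt

/-- The edge-word `w(e) = a₀a₁⋯a_D` of an edge `e : u → v`, namely `u`
followed by the last letter of `v`. -/
def Edge.word {d D : ℕ} (e : Edge d D) : List (Fin (d+1)) :=
  e.src.word ++ e.tgt.word.drop (D - 1)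

/-- `p` is a walk from `x` to `y`, recorded as the list of successive vertices. -/
def IsWalk {d D : ℕ} (p : List (Vertex d D)) (x y : Vertex d D) : Prop :=
  p.head? = some x ∧ p.getLast? = some y ∧ p.Chain' Adj

/-- Directed graph distance in `K(d,D)`. -/
noncomputable def dist {d D : ℕ} (x y : Vertex d D) : ℕ :=
  sInf {k | ∃ p : List (Vertex d D), IsWalk p x y ∧ p.length = k + 1}

/-- `N(e;k,t)`: the number of ordered pairs `(x,y)` with `dist x y = k` such
that some geodesic (walk of length `k = dist x y`) from `x` to `y` uses `e` as
its `t`-th edge. -/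
noncomputable def N {d D : ℕ} (e : Edge d D) (k t : ℕ) : ℕ :=
  Set.ncard {xy : Vertex d D × Vertex d D |
    dist xy.1 xy.2 = k ∧
    ∃ p : List (Vertex d D), IsWalk p xy.1 xy.2 ∧ p.length = k + 1 ∧
      p[t-1]? = some e.src ∧ p[t]? = some e.tgt}

/-- `U_k(e) = ∑_{t=1}^{k} N(e;k,t)`. -/
noncomputable def U {d D : ℕ} (e : Edge d D) (k : ℕ) : ℕ :=
  ∑ t ∈ Finset.Icc 1 k, N e k t

/-- `cong(e) = ∑_{k=1}^{D} U_k(e)`. -/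
noncomputable def cong {d D : ℕ} (e : Edge d D) : ℕ :=
  ∑ k ∈ Finset.Icc 1 D, U e k

/-- `τ(d,D) = (D−1)·d^{D−2} + D·d^{D−1}`. -/
def tau (d D : ℕ) : ℕ := (D - 1) * d ^ (D - 2) + D * d ^ (D - 1)

/-- A word has a border: some proper nonempty prefix equals the suffix of the
same length. -/
def HasBorder {α : Type*} (w : List α) : Prop :=
  ∃ ℓ, 1 ≤ ℓ ∧ ℓ ≤ w.length - 1 ∧ w.take ℓ = w.drop (w.length - ℓ)

/-- An unbordered word. -/
def Unbordered {α : Type*} (w : List α) : Prop := ¬ HasBorder w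

/-- A square-free word: no nonempty factor of the form `XX`. -/
def SquareFree {α : Type*} (w : List α) : Prop :=
  ¬ ∃ X : List α, X ≠ [] ∧ (X ++ X) <:+: w

/-- A `7/4⁺`-power-free word: no factor `x^k y` with `x` nonempty, `k ≥ 1`,
`y` a prefix of `x`, and `(k·|x| + |y|)/|x| > 7/4`. -/
def SevenFourthsPlusFree {α : Type*} (w : List α) : Prop :=
  ¬ ∃ (x y : List α) (k : ℕ), x ≠ [] ∧ 1 ≤ k ∧ y <+: x ∧
    ((List.replicate k x).flatten ++ y) <:+: w ∧
    7 * x.length < 4 * (k * x.length + y.length)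

/-- A word over `{0,1,…,d}` is ternary if it uses only the letters `{0,1,2}`. -/
def IsTernary {n : ℕ} (w : List (Fin n)) : Prop := ∀ a ∈ w, (a : ℕ) < 3

/-- The suffix of `w` of length `t`. -/
def suffixWord {α : Type*} (w : List α) (t : ℕ) : List α := w.drop (w.length - t)

/-- `R_t(w)`: the set of admissible overlap lengths `r` at position `t`, i.e.
those `r` with `t+1 ≤ r ≤ |w|−t−1` such that `w = A·B·V·B` where `B` is the
suffix of `w` of length `t`, `V` is nonempty, and `|B·V| = r`. -/
noncomputable def Rt {α : Type*} (w : List α) (t : ℕ) : Finset ℕ :=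
  (Finset.Icc (t + 1) (w.length - t - 1)).filter fun r =>
    ∃ A V : List α, V ≠ [] ∧
      w = A ++ suffixWord w t ++ V ++ suffixWord w t ∧ t + V.length = r

/-- The deficit `Δ_t(e) = d^{D−1} − N(e;D,t)`. -/
noncomputable def deficit {d D : ℕ} (e : Edge d D) (t : ℕ) : ℝ :=
  (d : ℝ) ^ (D - 1) - (N e D t : ℝ)

/-- The total deficit `Δ(e) = ∑_{t=1}^{D} Δ_t(e)`. -/
noncomputable def totalDeficit {d D : ℕ} (e : Edge d D) : ℝ :=
  ∑ t ∈ Finset.Icc 1 D, deficit e t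

/-- The weighted overlap count
`Ω_d(e) = ∑_{j=1}^{⌈(D+1)/2⌉} ∑_{r ∈ R_j(w(e))} d^{−(r−j)}`. -/
noncomputable def Omega {d D : ℕ} (e : Edge d D) : ℝ :=
  ∑ j ∈ Finset.Icc 1 ((D + 2) / 2), ∑ r ∈ Rt e.word j, (d : ℝ) ^ ((j : ℤ) - (r : ℤ))

/-- The overlap `ov(u,v)`: the largest `j ≤ D` such that the last `j` letters
of `u` equal the first `j` letters of `v`. -/
noncomputable def ov {d D : ℕ} (u v : Vertex d D) : ℕ :=
  sSup {j | j ≤ D ∧ u.word.drop (D - j) = v.word.take j}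

end Kautz

/-!
The key inequality is `k · U_D(e) ≤ D · d^(D-k) · U_k(e)` for `1 ≤ k ≤ D`. A geodesic of length
`D` using `e` as its `t`-th edge contains a geodesic of length `k` using `e` as its `t'`-th edge
whenever `t' ≤ t ≤ t' + (D - k)`, and since all in- and out-degrees are `d`, at most `d^(D-k)`
geodesics of length `D` contain a given one of length `k`; hence `N(e;D,t) ≤ d^(D-k) · N(e;k,t')`.
Pairing `t = ⌊n/k⌋ + 1` with `t' = ⌊n/D⌋ + 1` for `n < kD` sums these to the key inequality.
Summing it over `k` gives `D · cong(e) ≥ U_D(e) · ∑_k k r^(D-k)` with `r = 1/d`, and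
`∑_{k=1}^{D} k r^(D-k) ≥ D/(1-r) - r/(1-r)²` is exactly the claimed constant.
-/

theorem Set.ncard_le_mul_ncard_of_forall_exists {α β : Type*} [Finite α] [Finite β]
    {s : Set α} {t : Set β} (r : α → β → Prop) (n : ℕ) (hst : ∀ a ∈ s, ∃ b ∈ t, r a b)
    (hn : ∀ b ∈ t, {a ∈ s | r a b}.ncard ≤ n) : s.ncard ≤ n * t.ncard := by
  obtain ⟨t, rfl⟩ := t.toFinite.exists_finset_coe
  calc s.ncard ≤ (⋃ b ∈ t, {a ∈ s | r a b}).ncard := by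
        refine Set.ncard_le_ncard (fun a ha => ?_)
        obtain ⟨b, hb, hab⟩ := hst a ha
        exact Set.mem_biUnion hb ⟨ha, hab⟩
    _ ≤ ∑ b ∈ t, {a ∈ s | r a b}.ncard := t.set_ncard_biUnion_le _
    _ ≤ t.card • n := Finset.sum_le_card_nsmul _ _ _ hn
    _ = n * (t : Set β).ncard := by rw [Set.ncard_coe_finset, smul_eq_mul, mul_comm]

theorem List.ncard_isChain_heads_le {α : Type*} [Finite α] {R : α → α → Prop} {n : ℕ}
    (hR : ∀ z, {x | R x z}.ncard ≤ n) (u : α) (i : ℕ) :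
    {x | ∃ p : List α, p.head? = some x ∧ p.getLast? = some u ∧ p.length = i + 1 ∧
      p.IsChain R}.ncard ≤ n ^ i := by
  induction i with
  | zero =>
    refine (Set.ncard_le_ncard (t := {u}) ?_).trans (Set.ncard_singleton u).le
    rintro x ⟨_ | ⟨a, _ | _⟩, hx, hu, hlen, -⟩ <;> simp_all
  | succ i ih =>
    rw [pow_succ']
    refine (Set.ncard_le_mul_ncard_of_forall_exists (fun x z => R x z) n ?_ fun z _ =>
      (Set.ncard_le_ncard fun x hx => hx.2).trans (hR z)).trans (Nat.mul_le_mul_left n ih)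
    rintro x ⟨_ | ⟨a, _ | ⟨z, q⟩⟩, hx, hu, hlen, hc⟩
    · simp at hx
    · simp at hlen
    · simp only [head?_cons, Option.some.injEq, getLast?_cons_cons, length_cons,
        Nat.add_right_cancel_iff, isChain_cons_cons] at hx hu hlen hc
      subst hx
      exact ⟨z, ⟨z :: q, rfl, hu, by simpa using hlen, hc.2⟩, hc.1⟩

theorem Fin.ncard_setOf_le_of_not {n : ℕ} {P : Fin (n + 1) → Prop} {c : Fin (n + 1)} (hc : ¬ P c) :
    {a | P a}.ncard ≤ n := by
  have : {a | P a} ⊂ Set.univ :=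
    Set.ssubset_univ_iff.mpr fun h => hc (Set.eq_univ_iff_forall.mp h c)
  simpa using Set.ncard_lt_ncard this

theorem Finset.sum_range_mul_div {M : Type*} [AddCommMonoid M] (g : ℕ → M) (A k : ℕ) :
    ∑ n ∈ range (A * k), g (n / k) = k • ∑ t ∈ range A, g t := by
  induction A with
  | zero => simp
  | succ A ih =>
    rw [Nat.succ_mul, sum_range_add, ih, sum_range_succ, smul_add]
    congr 1
    calc ∑ j ∈ range k, g ((A * k + j) / k) = ∑ j ∈ range k, g A := sum_congr rfl fun j hj => by
          rw [Nat.add_comm, Nat.add_mul_div_right _ _ (by grind), Nat.div_eq_of_lt (by grind),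
            zero_add]
      _ = k • g A := by rw [sum_const, card_range]

theorem Nat.div_le_div_add_sub {n k m : ℕ} (hk : 0 < k) (hkm : k ≤ m) (hn : n < m * k) :
    n / k ≤ n / m + (m - k) := by
  obtain ⟨s, rfl⟩ := Nat.exists_eq_add_of_le hkm
  have hq : n / (k + s) < k := Nat.div_lt_of_lt_mul hn
  have hn' : n < (k + s) * (n / (k + s) + 1) := Nat.lt_mul_div_succ n (by omega)
  rw [Nat.add_sub_cancel_left, ← Nat.lt_succ_iff, Nat.div_lt_iff_lt_mul hk]
  nlinarith

theorem le_sum_Icc_mul_pow {r : ℝ} (hr0 : 0 ≤ r) (hr1 : r < 1) (D : ℕ) :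
    D / (1 - r) - r / (1 - r) ^ 2 ≤ ∑ k ∈ Finset.Icc 1 D, (k : ℝ) * r ^ (D - k) := by
  have h1r : 1 - r ≠ 0 := by linarith
  induction D with
  | zero =>
    rw [Finset.Icc_eq_empty (by omega), Finset.sum_empty, Nat.cast_zero, zero_div, zero_sub,
      neg_nonpos]
    positivity
  | succ D ih =>
    have hshift : ∑ k ∈ Finset.Icc 1 D, (k : ℝ) * r ^ (D + 1 - k)
        = r * ∑ k ∈ Finset.Icc 1 D, (k : ℝ) * r ^ (D - k) := by
      rw [Finset.mul_sum]
      refine Finset.sum_congr rfl fun k hk => ?_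
      rw [Nat.sub_add_comm (Finset.mem_Icc.mp hk).2, pow_succ]
      ring
    rw [Finset.sum_Icc_succ_top (by omega), hshift, Nat.sub_self, pow_zero, mul_one]
    have key : ((D + 1 : ℕ) : ℝ) / (1 - r) - r / (1 - r) ^ 2
        = r * (D / (1 - r) - r / (1 - r) ^ 2) + (D + 1 : ℕ) := by
      field_simp
      push_cast
      ring
    rw [key]
    gcongr

namespace Kautz

variable {d D : ℕ}

theorem Vertex.ext {v w : Vertex d D} (h : v.word = w.word) : v = w := by
  cases v; cases w; cases h; rfl

instance : Finite (Vertex d D) :=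
  Finite.of_injective (β := List.Vector (Fin (d + 1)) D) (fun v => ⟨v.word, v.length_eq⟩)
    fun _ _ h => Vertex.ext (congrArg Subtype.val h)

theorem Adj.exists_cons {x z : Vertex d D} (h : Adj x z) :
    ∃ a, x.word = (a :: z.word).dropLast ∧ (a :: z.word).IsChain (· ≠ ·) := by
  obtain ⟨_ | ⟨a, w⟩, hlen, hc, hx, hz⟩ := h
  · simp at hlen
  · rw [List.tail_cons] at hz
    exact ⟨a, hz ▸ hx, hz ▸ hc⟩

theorem Adj.exists_concat {z y : Vertex d D} (h : Adj z y) :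
    ∃ b, y.word = (z.word ++ [b]).tail ∧ (z.word ++ [b]).IsChain (· ≠ ·) := by
  obtain ⟨w, hlen, hc, hz, hy⟩ := h
  have hw : w ≠ [] := List.ne_nil_of_length_pos (by omega)
  rw [← List.dropLast_append_getLast hw, ← hz] at hc hy
  exact ⟨_, hy, hc⟩

theorem ncard_adj_left_le (hD : 0 < D) (z : Vertex d D) : {x | Adj x z}.ncard ≤ d := by
  obtain ⟨c, l, hz⟩ := List.exists_cons_of_length_pos (z.length_eq.symm ▸ hD)
  refine (Set.ncard_le_ncard_of_injOn (fun x => x.word.headD c)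
    (t := {a | (a :: z.word).IsChain (· ≠ ·)}) ?_ ?_).trans (Fin.ncard_setOf_le_of_not (c := c) ?_)
  · rintro x hx
    obtain ⟨a, hxa, ha⟩ := hx.exists_cons
    simpa [hxa, hz] using ha
  · rintro x hx x' hx' (hxx' : x.word.headD c = x'.word.headD c)
    obtain ⟨a, hxa, -⟩ := Adj.exists_cons hx
    obtain ⟨a', hxa', -⟩ := Adj.exists_cons hx'
    simp only [hxa, hxa', hz, List.dropLast_cons_cons, List.headD_cons] at hxx'
    exact Vertex.ext (by rw [hxa, hxa', hxx'])
  · simp [hz]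

theorem ncard_adj_right_le (hD : 0 < D) (z : Vertex d D) : {y | Adj z y}.ncard ≤ d := by
  have hz : z.word ≠ [] := List.ne_nil_of_length_pos (z.length_eq.symm ▸ hD)
  refine (Set.ncard_le_ncard_of_injOn (fun y => y.word.getLastD (z.word.getLast hz))
    (t := {b | (z.word ++ [b]).IsChain (· ≠ ·)}) ?_ ?_).trans
    (Fin.ncard_setOf_le_of_not (P := fun b => (z.word ++ [b]).IsChain (· ≠ ·))
      (c := z.word.getLast hz) ?_)
  · rintro y hy
    obtain ⟨b, hyb, hb⟩ := hy.exists_concat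
    simpa [hyb, List.tail_append_of_ne_nil hz] using hb
  · rintro y hy y' hy' hyy'
    obtain ⟨b, hyb, -⟩ := Adj.exists_concat hy
    obtain ⟨b', hyb', -⟩ := Adj.exists_concat hy'
    simp only [hyb, hyb', List.tail_append_of_ne_nil hz, List.getLastD_concat] at hyy'
    exact Vertex.ext (by rw [hyb, hyb', hyy'])
  · simp [List.isChain_append, List.getLast?_eq_some_getLast hz]

section Walks

variable {p q : List (Vertex d D)} {x y u v : Vertex d D}

theorem IsWalk.append (hp : IsWalk p x u) (hq : IsWalk q u y) : IsWalk (p ++ q.tail) x y := by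
  obtain ⟨hpx, hpu, hpc⟩ := hp
  obtain ⟨hqu, hqy, hqc⟩ := hq
  obtain _ | ⟨u', q⟩ := q
  · simp at hqu
  obtain rfl : u' = u := by simpa using hqu
  rw [List.getLast?_cons, Option.some_inj] at hqy
  have hp : p ≠ [] := by rintro rfl; simp at hpx
  refine ⟨by simp [List.head?_append, hpx], ?_, ?_⟩
  · rcases hq : q.getLast? with _ | b <;> simp_all [List.getLast?_append]
  · rw [List.Chain', List.isChain_cons] at hqc
    refine List.isChain_append.mpr ⟨hpc, hqc.2, ?_⟩
    simpa [hpu] using hqc.1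

theorem IsWalk.take (h : IsWalk p x y) {j : ℕ} (hu : p[j]? = some u) :
    IsWalk (p.take (j + 1)) x u :=
  ⟨by simp [List.head?_take, h.1], by simp [List.getLast?_take, hu], h.2.2.take _⟩

theorem IsWalk.drop (h : IsWalk p x y) {j : ℕ} (hu : p[j]? = some u) :
    IsWalk (p.drop j) u y := by
  have hj : j < p.length := (List.getElem?_eq_some_iff.mp hu).1
  exact ⟨by simp [List.head?_drop, hu], by simp [List.getLast?_drop, hj.not_ge, h.2.1],
    h.2.2.drop _⟩

theorem ncard_walk_sources_le (hD : 0 < D) (u : Vertex d D) (i : ℕ) :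
    {x | ∃ p, IsWalk p x u ∧ p.length = i + 1}.ncard ≤ d ^ i := by
  refine (Set.ncard_le_ncard ?_).trans (List.ncard_isChain_heads_le (ncard_adj_left_le hD) u i)
  rintro x ⟨p, ⟨hx, hu, hc⟩, hlen⟩
  exact ⟨p, hx, hu, hlen, hc⟩

theorem ncard_walk_targets_le (hD : 0 < D) (v : Vertex d D) (i : ℕ) :
    {y | ∃ p, IsWalk p v y ∧ p.length = i + 1}.ncard ≤ d ^ i := by
  refine (Set.ncard_le_ncard ?_).trans
    (List.ncard_isChain_heads_le (R := fun a b => Adj b a) (ncard_adj_right_le hD) v i)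
  rintro y ⟨p, ⟨hv, hy, hc⟩, hlen⟩
  exact ⟨p.reverse, by simpa using hy, by simpa using hv, by simpa using hlen,
    List.isChain_reverse.mpr hc⟩

theorem dist_le_of_isWalk {k : ℕ} (h : IsWalk p x y) (hlen : p.length = k + 1) :
    dist x y ≤ k :=
  Nat.sInf_le ⟨p, h, hlen⟩

theorem exists_isWalk_length_dist (h : IsWalk p x y) :
    ∃ q, IsWalk q x y ∧ q.length = dist x y + 1 :=
  Nat.sInf_mem (s := {k | ∃ p, IsWalk p x y ∧ p.length = k + 1}) ⟨p.length - 1, p, h, by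
    have : p ≠ [] := by rintro rfl; simp [IsWalk] at h
    have := List.length_pos_iff.mpr this
    omega⟩

theorem dist_triangle (hp : IsWalk p x u) (hq : IsWalk q u y) :
    dist x y ≤ dist x u + dist u y := by
  obtain ⟨p', hp', hp'len⟩ := exists_isWalk_length_dist hp
  obtain ⟨q', hq', hq'len⟩ := exists_isWalk_length_dist hq
  exact dist_le_of_isWalk (hp'.append hq') (by simp [hp'len, hq'len]; omega)

theorem dist_eq_of_geodesic {n i k : ℕ} (h : IsWalk p x y) (hlen : p.length = n + 1)
    (hdist : dist x y = n) (hu : p[i]? = some u) (hv : p[i + k]? = some v) :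
    dist u v = k := by
  have hik : i + k < p.length := (List.getElem?_eq_some_iff.mp hv).1
  have hxu : IsWalk (p.take (i + 1)) x u := h.take hu
  have huy : IsWalk (p.drop i) u y := h.drop hu
  have huv : IsWalk ((p.drop i).take (k + 1)) u v := huy.take (by rwa [List.getElem?_drop])
  have hvy : IsWalk ((p.drop i).drop k) v y := huy.drop (by rwa [List.getElem?_drop])
  have hxu_le : dist x u ≤ i := dist_le_of_isWalk hxu (by rw [List.length_take]; omega)
  have huv_le : dist u v ≤ k :=
    dist_le_of_isWalk huv (by simp only [List.length_take, List.length_drop]; omega)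
  have hvy_le : dist v y ≤ n - (i + k) :=
    dist_le_of_isWalk hvy (by simp only [List.length_drop]; omega)
  have hxy_le : dist x y ≤ dist x u + (dist u v + dist v y) :=
    (dist_triangle hxu huy).trans (Nat.add_le_add_left (dist_triangle huv hvy) _)
  omega

end Walks

theorem N_le_pow_mul_N (e : Edge d D) {k t t' : ℕ} (ht' : 1 ≤ t') (ht'k : t' ≤ k)
    (hkD : k ≤ D) (ht't : t' ≤ t) (htt' : t ≤ t' + (D - k)) :
    N e D t ≤ d ^ (D - k) * N e k t' := by
  have hD : 0 < D := by omega
  set i := t - t'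
  unfold N
  refine Set.ncard_le_mul_ncard_of_forall_exists (fun xy uv => ∃ p, IsWalk p xy.1 xy.2 ∧
    p.length = D + 1 ∧ p[i]? = some uv.1 ∧ p[i + k]? = some uv.2) _ ?_ ?_
  · rintro ⟨x, y⟩ ⟨hdist, p, hp, hlen, hsrc, htgt⟩
    have hu : p[i]? = some p[i] := List.getElem?_eq_getElem (by omega)
    have hv : p[i + k]? = some p[i + k] := List.getElem?_eq_getElem (by omega)
    have hseg : IsWalk ((p.drop i).take (k + 1)) p[i] p[i + k] :=
      (hp.drop hu).take (by rwa [List.getElem?_drop])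
    have hseg_len : ((p.drop i).take (k + 1)).length = k + 1 := by
      simp only [List.length_take, List.length_drop]; omega
    refine ⟨(p[i], p[i + k]), ⟨dist_eq_of_geodesic hp hlen hdist hu hv, _, hseg, hseg_len, ?_, ?_⟩,
      p, hp, hlen, hu, hv⟩
    · rwa [List.getElem?_take_of_lt (by omega), List.getElem?_drop,
        show i + (t' - 1) = t - 1 by omega]
    · rwa [List.getElem?_take_of_lt (by omega), List.getElem?_drop, show i + t' = t by omega]
  · rintro ⟨u, v⟩ -
    calc _ ≤ ({x | ∃ p, IsWalk p x u ∧ p.length = i + 1} ×ˢ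
          {y | ∃ p, IsWalk p v y ∧ p.length = (D - k - i) + 1}).ncard := by
          refine Set.ncard_le_ncard ?_
          rintro ⟨x, y⟩ ⟨-, p, hp, hlen, hu, hv⟩
          exact ⟨⟨_, hp.take hu, by rw [List.length_take]; omega⟩,
            ⟨_, hp.drop hv, by rw [List.length_drop]; omega⟩⟩
      _ ≤ d ^ i * d ^ (D - k - i) := by
          rw [Set.ncard_prod]
          exact Nat.mul_le_mul (ncard_walk_sources_le hD u i) (ncard_walk_targets_le hD v _)
      _ = d ^ (D - k) := by rw [← pow_add]; congr 1; omega

theorem U_eq_sum_range (e : Edge d D) (k : ℕ) : U e k = ∑ t ∈ Finset.range k, N e k (t + 1) := by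
  rw [U, Finset.range_eq_Ico, Finset.sum_Ico_add' (c := 1)]
  rfl

theorem mul_U_le (e : Edge d D) {k : ℕ} (hk : 1 ≤ k) (hkD : k ≤ D) :
    k * U e D ≤ D * (d ^ (D - k) * U e k) := by
  have hU_D : k * U e D = ∑ n ∈ Finset.range (D * k), N e D (n / k + 1) := by
    rw [Finset.sum_range_mul_div (fun t => N e D (t + 1)), U_eq_sum_range, smul_eq_mul]
  have hU_k : D * (d ^ (D - k) * U e k)
      = ∑ n ∈ Finset.range (k * D), d ^ (D - k) * N e k (n / D + 1) := by
    rw [Finset.sum_range_mul_div (fun t => d ^ (D - k) * N e k (t + 1)), U_eq_sum_range,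
      Finset.mul_sum, smul_eq_mul]
  rw [hU_D, hU_k, Nat.mul_comm k D]
  refine Finset.sum_le_sum fun n hn => ?_
  have hn : n < D * k := Finset.mem_range.mp hn
  exact N_le_pow_mul_N e (Nat.succ_pos _) (Nat.div_lt_of_lt_mul hn) hkD
    (Nat.succ_le_succ (Nat.div_le_div_left hkD (by omega)))
    (by have := Nat.div_le_div_add_sub (by omega) hkD hn; omega)

theorem sum_mul_U_le_mul_cong (e : Edge d D) (hd : 0 < d) :
    (∑ k ∈ Finset.Icc 1 D, (k : ℝ) * (d : ℝ)⁻¹ ^ (D - k)) * U e D ≤ D * cong e := by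
  rw [cong, Nat.cast_sum, Finset.sum_mul, Finset.mul_sum]
  refine Finset.sum_le_sum fun k hk => ?_
  obtain ⟨hk1, hkD⟩ := Finset.mem_Icc.mp hk
  have hpow : (d : ℝ) ^ (D - k) * (d : ℝ)⁻¹ ^ (D - k) = 1 := by
    rw [← mul_pow, mul_inv_cancel₀ (by positivity), one_pow]
  have h : (k : ℝ) * U e D ≤ D * (d ^ (D - k) * U e k) := by exact_mod_cast mul_U_le e hk1 hkD
  calc (k : ℝ) * (d : ℝ)⁻¹ ^ (D - k) * U e D = (k * U e D) * (d : ℝ)⁻¹ ^ (D - k) := by ring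
    _ ≤ (D * (d ^ (D - k) * U e k)) * (d : ℝ)⁻¹ ^ (D - k) := by gcongr
    _ = D * U e k := by rw [mul_assoc, mul_right_comm _ (U e k : ℝ), hpow, one_mul]

end Kautz

/-- For `d ≥ 2` and any directed edge `e` of `K(d,D)`,
`cong(e) = ∑_{k=1}^{D} U_k(e) ≥ (d/(d−1))·(1 − 1/(D·(d−1)))·U_D(e)`. -/
theorem statement9 (d D : ℕ) (hd : 2 ≤ d) (e : Kautz.Edge d D) :
    ((d : ℝ) / ((d : ℝ) - 1)) * (1 - 1 / ((D : ℝ) * ((d : ℝ) - 1))) *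
        (Kautz.U e D : ℝ)
      ≤ (Kautz.cong e : ℝ) := by
  rcases Nat.eq_zero_or_pos D with rfl | hD
  · simp [Kautz.U]
  have hd1 : (1 : ℝ) < d := by exact_mod_cast hd
  have hcoef : (d : ℝ) / (d - 1) * (1 - 1 / (D * (d - 1)))
      = (D / (1 - (d : ℝ)⁻¹) - (d : ℝ)⁻¹ / (1 - (d : ℝ)⁻¹) ^ 2) / D := by
    have : (d : ℝ) - 1 ≠ 0 := by linarith
    field_simp
  rw [hcoef, div_mul_eq_mul_div, div_le_iff₀ (by positivity)]
  calc _ ≤ (∑ k ∈ Finset.Icc 1 D, (k : ℝ) * (d : ℝ)⁻¹ ^ (D - k)) * Kautz.U e D := by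
        gcongr
        exact le_sum_Icc_mul_pow (by positivity) (inv_lt_one_of_one_lt₀ hd1) D
    _ ≤ D * Kautz.cong e := Kautz.sum_mul_U_le_mul_cong e (by omega)
    _ = Kautz.cong e * D := mul_comm _ _
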